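/- arXiv:1904.03395 — 6 statements merged into one kernel-verified Lean document; each statement's English description precedes it below -/
import Mathlib

section
/- Let d ≥ 2 be an integer. For every n ∈ ℕ, the alternating binomial transform of the sequence H_d satisfies: Σ_{k=0}^{n} C(n,k)·(−1)^{n−k}·H_d(k) = 0 if n is not divisible by d, and Σ_{k=0}^{n} C(n,k)·(−1)^{n−k}·H_d(k) = (md)!/(m!·d^m) if n = md for some m ∈ ℕ. -/
/-!
Choosing the set of points a permutation moves gives `H_d(n) = Σ_j C(n,j) G_d(j)`, where
`G_d(j) = j!/((j/d)!·d^(j/d))` (and `0` unless `d ∣ j`) counts the permutations of a `j`-set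
all of whose cycles have length `d`. So `H_d` is the binomial transform of `G_d`, and the
alternating sum in the theorem is the inverse transform, i.e. the `n`-th forward difference
of `H_d` at `0`; since `Δⁿ C(·,j) (0) = [n = j]`, it equals `G_d(n)`.
-/

/-- `Hd d n` is the number of permutations of an `n`-element set that are products of
pairwise disjoint cycles of length `d`, given by the explicit formula
`H_d(n) = Σ_{k=0}^{⌊n/d⌋} n!/((n−dk)!·k!·d^k)` (each summand is an integer, so the
natural-number division below is exact). -/
def Hd (d n : ℕ) : ℕ :=
  ∑ k ∈ Finset.range (n / d + 1),
    Nat.factorial n / (Nat.factorial (n - d * k) * Nat.factorial k * d ^ k)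

open Finset Nat
open scoped fwdDiff

def Gd (d j : ℕ) : ℕ :=
  if d ∣ j then j ! / ((j / d)! * d ^ (j / d)) else 0

lemma factorial_mul_pow_dvd_factorial_mul {d : ℕ} (hd : d ≠ 0) (k : ℕ) :
    k ! * d ^ k ∣ (d * k)! := by
  have hbell : k ! * d ! ^ k ∣ (d * k)! :=
    ⟨uniformBell k d, by rw [mul_comm d k, ← uniformBell_mul_eq k hd]; ring⟩
  have hpow : d ^ k ∣ d ! ^ k := pow_dvd_pow_of_dvd (dvd_factorial (pos_of_ne_zero hd) le_rfl) k
  exact (mul_dvd_mul_left _ hpow).trans hbell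

lemma factorial_div_eq_choose_mul_Gd {d k n : ℕ} (hd : d ≠ 0) (hkn : d * k ≤ n) :
    n ! / ((n - d * k)! * k ! * d ^ k) = n.choose (d * k) * Gd d (d * k) := by
  rw [Gd, if_pos (dvd_mul_right d k), Nat.mul_div_cancel_left k (pos_of_ne_zero hd)]
  refine Nat.div_eq_of_eq_mul_left (by positivity) ?_
  calc n ! = n.choose (d * k) * (d * k)! * (n - d * k)! :=
        (choose_mul_factorial_mul_factorial hkn).symm
    _ = n.choose (d * k) * ((d * k)! / (k ! * d ^ k) * (k ! * d ^ k)) * (n - d * k)! := by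
      rw [Nat.div_mul_cancel (factorial_mul_pow_dvd_factorial_mul hd k)]
    _ = _ := by ring

lemma mem_range_div_add_one_iff {d : ℕ} (hd : d ≠ 0) {k n : ℕ} :
    k ∈ range (n / d + 1) ↔ d * k ≤ n := by
  rw [mem_range, Nat.lt_succ_iff, Nat.le_div_iff_mul_le (pos_of_ne_zero hd), mul_comm]

lemma range_filter_dvd_eq_image {d : ℕ} (hd : d ≠ 0) (n : ℕ) :
    {j ∈ range (n + 1) | d ∣ j} = (range (n / d + 1)).image (d * ·) := by
  ext j
  simp only [mem_filter, mem_image, mem_range_div_add_one_iff hd, mem_range]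
  constructor
  · rintro ⟨hj, k, rfl⟩
    exact ⟨k, by omega, rfl⟩
  · rintro ⟨k, hk, rfl⟩
    exact ⟨by omega, dvd_mul_right d k⟩

lemma Hd_eq_sum_choose_mul_Gd (d n : ℕ) :
    Hd d n = ∑ j ∈ range (n + 1), n.choose j * Gd d j := by
  rcases eq_or_ne d 0 with rfl | hd
  · simp [Hd, Gd, Nat.div_self (factorial_pos n)]
  rw [← sum_filter_of_ne (p := (d ∣ ·)) fun j _ h ↦ ?_, range_filter_dvd_eq_image hd,
    sum_image fun _ _ _ _ h ↦ Nat.eq_of_mul_eq_mul_left (pos_of_ne_zero hd) h, Hd]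
  · exact sum_congr rfl fun k hk ↦
      factorial_div_eq_choose_mul_Gd hd ((mem_range_div_add_one_iff hd).mp hk)
  · by_contra hdj
    simp [Gd, hdj] at h

def binomialTransform (g : ℕ → ℤ) (n : ℕ) : ℤ :=
  ∑ j ∈ range (n + 1), (n.choose j : ℤ) * g j

lemma binomialTransform_eq_sum_range_of_le (g : ℕ → ℤ) {k n : ℕ} (hkn : k ≤ n) :
    binomialTransform g k = ∑ j ∈ range (n + 1), (k.choose j : ℤ) * g j := by
  refine sum_subset (range_subset_range.mpr (by omega)) fun j _ hj ↦ ?_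
  rw [Nat.choose_eq_zero_of_lt (by simpa using hj), Nat.cast_zero, zero_mul]

theorem sum_choose_mul_neg_one_pow_mul_binomialTransform (g : ℕ → ℤ) (n : ℕ) :
    ∑ k ∈ range (n + 1), (n.choose k : ℤ) * (-1) ^ (n - k) * binomialTransform g k = g n := by
  set F : ℕ → ℤ := ∑ j ∈ range (n + 1), g j • fun x ↦ (x.choose j : ℤ)
  have hF : ∀ k ∈ range (n + 1), binomialTransform g k = F k := fun k hk ↦ by
    rw [binomialTransform_eq_sum_range_of_le g (Nat.lt_succ_iff.mp (mem_range.mp hk))]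
    simp [F, Finset.sum_apply, mul_comm]
  have hΔ : Δ_[1] ^[n] F 0 = g n := by
    simp only [F, fwdDiff_iter_finsetSum, fwdDiff_iter_const_smul, Finset.sum_apply, Pi.smul_apply,
      fwdDiff_iter_choose_zero, smul_eq_mul, mul_ite, mul_one, mul_zero, sum_ite_eq, mem_range,
      lt_add_one, if_true]
  rw [← hΔ, fwdDiff_iter_eq_sum_shift]
  refine sum_congr rfl fun k hk ↦ ?_
  rw [hF k hk, zero_add, smul_eq_mul, nsmul_one, Nat.cast_id]
  ring

lemma Hd_eq_binomialTransform (d n : ℕ) :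
    (Hd d n : ℤ) = binomialTransform (fun j ↦ (Gd d j : ℤ)) n := by
  rw [Hd_eq_sum_choose_mul_Gd, binomialTransform]
  push_cast
  rfl

theorem stmt0_general (d : ℕ) (n : ℕ) :
    (∑ k ∈ Finset.range (n + 1), (n.choose k : ℤ) * (-1) ^ (n - k) * (Hd d k : ℤ)) =
      if d ∣ n then
        ((Nat.factorial n / (Nat.factorial (n / d) * d ^ (n / d)) : ℕ) : ℤ)
      else 0 := by
  simp_rw [Hd_eq_binomialTransform, sum_choose_mul_neg_one_pow_mul_binomialTransform, Gd,
    Nat.cast_ite, Nat.cast_zero]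

theorem stmt0 (d : ℕ) (hd : 2 ≤ d) (n : ℕ) :
    (∑ k ∈ Finset.range (n + 1), (n.choose k : ℤ) * (-1) ^ (n - k) * (Hd d k : ℤ)) =
      if d ∣ n then
        ((Nat.factorial n / (Nat.factorial (n / d) * d ^ (n / d)) : ℕ) : ℤ)
      else 0 :=
  stmt0_general d n
end

section
/- Let p be an odd prime number. Then for each n ∈ ℕ: H_{p−1}(n) ≡ 2 (mod p) if n ≡ −1 (mod p), and H_{p−1}(n) ≡ 1 (mod p) otherwise. In particular ν_p(H_{p−1}(n)) = 0 for every n ∈ ℕ. -/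
open Finset Nat

def perfectCycleCount (e k : ℕ) : ℕ := ∏ j ∈ range k, ((e + 1) * j + 1).ascFactorial e

@[simp]
lemma perfectCycleCount_zero (e : ℕ) : perfectCycleCount e 0 = 1 := rfl

lemma perfectCycleCount_succ (e k : ℕ) :
    perfectCycleCount e (k + 1) = perfectCycleCount e k * ((e + 1) * k + 1).ascFactorial e :=
  prod_range_succ _ _

lemma perfectCycleCount_mul_factorial_mul_pow (e k : ℕ) :
    perfectCycleCount e k * (k ! * (e + 1) ^ k) = ((e + 1) * k)! := by
  induction k with
  | zero => simp
  | succ k ih =>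
    rw [perfectCycleCount_succ, factorial_succ k, pow_succ,
      show (e + 1) * (k + 1) = (e + 1) * k + e + 1 by ring, factorial_succ ((e + 1) * k + e),
      ← factorial_mul_ascFactorial, ← ih]
    ring

lemma factorial_div_eq_choose_mul_perfectCycleCount {e n k : ℕ} (h : (e + 1) * k ≤ n) :
    n ! / ((n - (e + 1) * k)! * k ! * (e + 1) ^ k) = n.choose ((e + 1) * k) * perfectCycleCount e k := by
  refine Nat.div_eq_of_eq_mul_left (by positivity) ?_
  rw [← choose_mul_factorial_mul_factorial h, ← perfectCycleCount_mul_factorial_mul_pow]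
  ring

lemma Hd_succ_eq_sum {e n N : ℕ} (h : n < (e + 1) * N) :
    Hd (e + 1) n = ∑ k ∈ range N, n.choose ((e + 1) * k) * perfectCycleCount e k := by
  have hdiv : n / (e + 1) < N := (Nat.div_lt_iff_lt_mul (succ_pos e)).2 (by linarith)
  rw [Hd, sum_congr rfl fun k hk => factorial_div_eq_choose_mul_perfectCycleCount ?_]
  · refine sum_subset (range_subset_range.2 hdiv) fun k _ hk => ?_
    rw [mem_range, not_lt, Nat.succ_le_iff, Nat.div_lt_iff_lt_mul (succ_pos e), mul_comm] at hk
    rw [choose_eq_zero_of_lt hk, zero_mul]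
  · rw [mem_range, Nat.lt_succ_iff, Nat.le_div_iff_mul_le (succ_pos e), mul_comm] at hk
    exact hk

lemma choose_add_mul_ascFactorial (n m e : ℕ) :
    (n + e).choose (m + e) * (m + 1).ascFactorial e = (n + 1).ascFactorial e * n.choose m := by
  rcases le_or_gt m n with h | h
  · refine Nat.eq_of_mul_eq_mul_right (by positivity : 0 < m ! * (n - m)!) ?_
    calc (n + e).choose (m + e) * (m + 1).ascFactorial e * (m ! * (n - m)!)
        = (n + e).choose (m + e) * (m + e)! * (n + e - (m + e))! := by
          rw [← factorial_mul_ascFactorial, Nat.add_sub_add_right]; ring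
      _ = (n + 1).ascFactorial e * (n.choose m * m ! * (n - m)!) := by
          rw [choose_mul_factorial_mul_factorial (by omega), choose_mul_factorial_mul_factorial h,
            ← factorial_mul_ascFactorial, mul_comm]
      _ = _ := by ring
  · rw [choose_eq_zero_of_lt h, choose_eq_zero_of_lt (by omega), zero_mul, mul_zero]

lemma choose_mul_perfectCycleCount_succ (e n k : ℕ) :
    (n + e + 1).choose ((e + 1) * (k + 1)) * perfectCycleCount e (k + 1) =
      (n + e).choose ((e + 1) * (k + 1)) * perfectCycleCount e (k + 1) +
        (n + 1).ascFactorial e * (n.choose ((e + 1) * k) * perfectCycleCount e k) := by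
  rw [show (e + 1) * (k + 1) = (e + 1) * k + e + 1 by ring, choose_succ_succ',
    perfectCycleCount_succ]
  linear_combination perfectCycleCount e k * choose_add_mul_ascFactorial n ((e + 1) * k) e

theorem Hd_succ_add_succ (e n : ℕ) :
    Hd (e + 1) (n + (e + 1)) = Hd (e + 1) (n + e) + (n + 1).ascFactorial e * Hd (e + 1) n := by
  have hN : ∀ m ≤ n + e + 1, m < (e + 1) * (n + e + 2) := fun m hm => by nlinarith
  rw [← add_assoc, Hd_succ_eq_sum (hN _ le_rfl), Hd_succ_eq_sum (hN _ (by omega)),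
    Hd_succ_eq_sum (N := n + e + 1) (by nlinarith), sum_range_succ' _ (n + e + 1),
    sum_range_succ' _ (n + e + 1), mul_sum]
  simp_rw [choose_mul_perfectCycleCount_succ, sum_add_distrib]
  simp only [mul_zero, choose_zero_right, perfectCycleCount_zero]
  ring

lemma Hd_of_lt {d n : ℕ} (h : n < d) : Hd d n = 1 := by
  rw [Hd, Nat.div_eq_of_lt h]
  simp [Nat.div_self (factorial_pos n)]

namespace ZMod

lemma natCast_add_sub {p k : ℕ} (m : ℕ) (hk : k ≤ p) :
    ((m + (p - k) : ℕ) : ZMod p) = m - k := by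
  push_cast [Nat.cast_sub hk, natCast_self]
  ring

lemma natCast_ne_neg_one_of_lt {p n : ℕ} (h : n < p - 1) : (n : ZMod p) ≠ -1 := by
  intro hn
  have : ((n + 1 : ℕ) : ZMod p) = 0 := by push_cast [hn]; ring
  have := Nat.le_of_dvd (succ_pos n) ((natCast_eq_zero_iff _ _).1 this)
  omega

lemma two_ne_zero_of_ne_two {p : ℕ} [Fact (1 < p)] (hp2 : p ≠ 2) : (2 : ZMod p) ≠ 0 :=
  Ring.two_ne_zero (by rwa [ringChar_zmod_n])

variable {p : ℕ} [Fact p.Prime]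

lemma natCast_succ_ascFactorial_sub_two_of_lt {r : ℕ} (hr : r < p) :
    ((r + 1).ascFactorial (p - 2) : ZMod p) = if r = 0 then 1 else if r = 1 then -1 else 0 := by
  have hp : p.Prime := Fact.out
  have hfact : (r ! : ZMod p) * (r + 1).ascFactorial (p - 2) = (r + (p - 2))! := by
    rw [← Nat.cast_mul, factorial_mul_ascFactorial]
  have hp1 : p - 2 + 1 = p - 1 := by have := hp.two_le; omega
  rcases (by omega : r = 0 ∨ r = 1 ∨ 2 ≤ r) with rfl | rfl | h
  · have wilson : ((p - 2 + 1 : ℕ) : ZMod p) * (p - 2)! = -1 := by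
      rw [← Nat.cast_mul, ← factorial_succ, hp1, wilsons_lemma]
    rw [hp1, Nat.cast_sub hp.one_le, natCast_self, Nat.cast_one, zero_sub] at wilson
    simp only [factorial_zero, Nat.cast_one, one_mul, zero_add] at hfact
    rw [if_pos rfl]
    linear_combination hfact - wilson
  · simp only [factorial_one, Nat.cast_one, one_mul, add_comm 1, hp1, wilsons_lemma] at hfact
    simpa using hfact
  · have hr_ne : (r ! : ZMod p) ≠ 0 := by
      rw [Ne, natCast_eq_zero_iff, hp.dvd_factorial]
      omega
    rw [(natCast_eq_zero_iff (r + (p - 2))! p).2 (hp.dvd_factorial.2 (by omega))] at hfact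
    rw [if_neg (by omega), if_neg (by omega)]
    exact (_root_.mul_eq_zero.1 hfact).resolve_left hr_ne

lemma natCast_ascFactorial_sub_two (m : ℕ) :
    ((m + 1).ascFactorial (p - 2) : ZMod p) =
      if (m : ZMod p) = 0 then 1 else if (m : ZMod p) = 1 then -1 else 0 := by
  have hcast : ((m + 1).ascFactorial (p - 2) : ZMod p) =
      ((m : ZMod p).val + 1).ascFactorial (p - 2) := by
    simp [ascFactorial_eq_prod_range]
  simp only [hcast, natCast_succ_ascFactorial_sub_two_of_lt (val_lt _), val_eq_zero,
    val_eq_one (Fact.out : p.Prime).one_lt]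

end ZMod

open ZMod in
theorem natCast_Hd_sub_one {p : ℕ} [Fact p.Prime] (hp2 : p ≠ 2) (n : ℕ) :
    (Hd (p - 1) n : ZMod p) = if (n : ZMod p) = -1 then 2 else 1 := by
  have hp : p.Prime := Fact.out
  have hp_two := hp.two_le
  have htwo := two_ne_zero_of_ne_two hp2
  induction n using Nat.strong_induction_on with | _ n ih => ?_
  rcases lt_or_ge n (p - 1) with hn | hn
  · rw [Hd_of_lt hn, if_neg (natCast_ne_neg_one_of_lt hn), Nat.cast_one]
  obtain ⟨m, rfl⟩ : ∃ m, n = m + (p - 1) := ⟨n - (p - 1), by omega⟩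
  have hrec := Hd_succ_add_succ (p - 2) m
  rw [show p - 2 + 1 = p - 1 by omega] at hrec
  rw [hrec, Nat.cast_add, Nat.cast_mul, ih _ (by omega), ih m (by omega),
    natCast_ascFactorial_sub_two, natCast_add_sub m hp.one_le, natCast_add_sub m hp.two_le]
  have zero_ne_neg_one : (0 : ZMod p) ≠ -1 := by simp
  have one_ne_neg_one : (1 : ZMod p) ≠ -1 := fun h => htwo (by linear_combination h)
  by_cases h0 : (m : ZMod p) = 0
  · have two_ne_one : (2 : ZMod p) ≠ 1 := fun h => one_ne_zero (by linear_combination h)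
    norm_num [h0, zero_ne_neg_one, two_ne_one]
  by_cases h1 : (m : ZMod p) = 1
  · norm_num [h1, zero_ne_neg_one, one_ne_neg_one]
  have hm2 : (m : ZMod p) - 2 ≠ -1 := fun h => h1 (by linear_combination h)
  have hm1 : (m : ZMod p) - 1 ≠ -1 := fun h => h0 (by linear_combination h)
  simp [h0, h1, hm1, hm2]

theorem stmt2 (p : ℕ) (hp : p.Prime) (hodd : Odd p) (n : ℕ) :
    (((n : ZMod p) = -1 → Hd (p - 1) n ≡ 2 [MOD p]) ∧
     ((n : ZMod p) ≠ -1 → Hd (p - 1) n ≡ 1 [MOD p])) ∧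
    padicValNat p (Hd (p - 1) n) = 0 := by
  have := Fact.mk hp
  have hp2 : p ≠ 2 := by rintro rfl; norm_num at hodd
  have hH := natCast_Hd_sub_one hp2 n
  refine ⟨⟨fun hn => ?_, fun hn => ?_⟩, padicValNat.eq_zero_of_not_dvd fun hdvd => ?_⟩
  · rw [← ZMod.natCast_eq_natCast_iff, hH, if_pos hn, Nat.cast_ofNat]
  · rw [← ZMod.natCast_eq_natCast_iff, hH, if_neg hn, Nat.cast_one]
  · rw [← ZMod.natCast_eq_zero_iff, hH] at hdvd
    split_ifs at hdvd
    exacts [ZMod.two_ne_zero_of_ne_two hp2 hdvd, one_ne_zero hdvd]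
end

section
/- Let d be a positive integer. If d ≥ 5 and d+1 is a composite number, then H_d(n) ≡ 1 (mod d+1) for every n ∈ ℕ. If d ≥ 4 and d+2 is a composite number, then H_d(n) ≡ 1 (mod d+2) for every n ∈ ℕ. -/
open Nat Finset

namespace Nat

theorem mul_dvd_factorial_of_lt {a b : ℕ} (ha : 0 < a) (hab : a < b) : a * b ∣ b ! := by
  rw [← mul_factorial_pred (by omega : b ≠ 0), mul_comm b]
  exact mul_dvd_mul (dvd_factorial ha (by omega)) dvd_rfl

theorem dvd_factorial_sub_three_of_not_prime {m : ℕ} (h6 : 6 ≤ m) (hm : ¬ m.Prime) :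
    m ∣ (m - 3)! := by
  set p := m.minFac
  have hp : 2 ≤ p := (minFac_prime (by omega)).two_le
  have hsq : p * p ≤ m := by simpa [sq] using minFac_sq_le_self (by omega) hm
  obtain ⟨q, hq⟩ : p ∣ m := minFac_dvd m
  have hpq : p ≤ q := by nlinarith
  rcases hpq.lt_or_eq with hlt | rfl
  · have h2q : 2 * q ≤ m := hq ▸ Nat.mul_le_mul_right q hp
    exact hq ▸ (mul_dvd_factorial_of_lt (by omega) hlt).trans
      (factorial_dvd_factorial (by omega))
  · have hp3 : 3 ≤ p := by nlinarith
    have h2p : 2 * p + 3 ≤ m := by nlinarith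
    calc m = p * p := hq
      _ ∣ p * (2 * p) := mul_dvd_mul_left p (dvd_mul_left p 2)
      _ ∣ (2 * p)! := mul_dvd_factorial_of_lt (by omega) (by omega)
      _ ∣ (m - 3)! := factorial_dvd_factorial (by omega)

end Nat

theorem Hd_summand_eq {d n k : ℕ} (hd : 0 < d) (hk : d * k ≤ n) :
    n ! / ((n - d * k)! * k ! * d ^ k) = n.choose (d * k) * k.uniformBell d * (d - 1)! ^ k := by
  refine Nat.div_eq_of_eq_mul_left (by positivity) ?_
  rw [← choose_mul_factorial_mul_factorial hk, mul_comm d k, ← uniformBell_mul_eq k hd.ne',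
    ← mul_factorial_pred hd.ne']
  ring

theorem Hd_modEq_one (d n : ℕ) (hd : 0 < d) : Hd d n ≡ 1 [MOD (d - 1)!] := by
  have hdvd : (d - 1)! ∣
      ∑ k ∈ range (n / d), n ! / ((n - d * (k + 1))! * (k + 1)! * d ^ (k + 1)) := by
    refine dvd_sum fun k hk => ?_
    have hkn : d * (k + 1) ≤ n := by
      have := Nat.div_mul_le_self n d
      nlinarith [mem_range.1 hk]
    rw [Hd_summand_eq hd hkn]
    exact (dvd_pow_self _ k.succ_ne_zero).mul_left _
  rw [Hd, sum_range_succ']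
  simpa [Nat.div_self (factorial_pos n)] using (Nat.modEq_zero_iff_dvd.2 hdvd).add_right 1

theorem stmt4 (d : ℕ) :
    (5 ≤ d → ¬ (d + 1).Prime → ∀ n : ℕ, Hd d n ≡ 1 [MOD d + 1]) ∧
    (4 ≤ d → ¬ (d + 2).Prime → ∀ n : ℕ, Hd d n ≡ 1 [MOD d + 2]) := by
  constructor
  · intro h5 hnp n
    have hdvd : d + 1 ∣ (d - 1)! :=
      (dvd_factorial_sub_three_of_not_prime (by omega) hnp).trans
        (factorial_dvd_factorial (by omega))
    exact (Hd_modEq_one d n (by omega)).of_dvd hdvd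
  · intro h4 hnp n
    have hdvd : d + 2 ∣ (d - 1)! := by
      simpa using dvd_factorial_sub_three_of_not_prime (by omega) hnp
    exact (Hd_modEq_one d n (by omega)).of_dvd hdvd
end

section
/- For each integer d ≥ 2 and each m ∈ ℕ, the coefficientwise congruence W_{d,m}(x) ≡ (1 + x^{d−1})^m (mod d−1) holds in ℤ[x]. -/
open Polynomial

/-- `W d m` is the polynomial `W_{d,m}(x)` defined by `W_{d,0}(x) = 1` and
`W_{d,m+1}(x) = W'_{d,m}(x) + (1 + x^{d−1})·W_{d,m}(x)`; it satisfies
`H_d^{(m)}(x) = W_{d,m}(x)·H_d(x)` where `H_d(x) = exp(x + x^d/d)`. -/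
noncomputable def W (d : ℕ) : ℕ → Polynomial ℤ
  | 0 => 1
  | m + 1 => Polynomial.derivative (W d m) + (1 + Polynomial.X ^ (d - 1)) * W d m

/-
Modulo `d - 1` the polynomial `P = 1 + x^(d-1)` has zero derivative, since its derivative is
`(d - 1) x^(d-2)`. The reduction of `W_{d,m}` satisfies `w_{m+1} = w_m' + P w_m`, and `P^m`
satisfies the same recursion because `(P^m)' = m P^(m-1) P' = 0`; hence `w_m = P^m`.
-/

theorem eq_pow_of_derivative_eq_zero {R : Type*} [CommSemiring R] {p : R[X]}
    (hp : derivative p = 0) {w : ℕ → R[X]} (h0 : w 0 = 1)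
    (hsucc : ∀ m, w (m + 1) = derivative (w m) + p * w m) (m : ℕ) : w m = p ^ m := by
  induction m with
  | zero => exact h0
  | succ m ih => rw [hsucc, ih, derivative_pow, hp, mul_zero, zero_add, pow_succ']

theorem derivative_one_add_X_pow_eq_zero {R : Type*} [CommSemiring R] {n : ℕ}
    (hn : (n : R) = 0) : derivative (1 + X ^ n : R[X]) = 0 := by
  simp [derivative_X_pow, hn]

theorem map_W_succ {R : Type*} [CommRing R] (f : ℤ →+* R) (d m : ℕ) :
    (W d (m + 1)).map f = derivative ((W d m).map f) + (1 + X ^ (d - 1)) * (W d m).map f := by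
  simp [W, derivative_map]

theorem stmt12_general (d : ℕ) (m : ℕ) :
    (W d m).map (Int.castRingHom (ZMod (d - 1))) =
      (((1 + Polynomial.X ^ (d - 1)) ^ m : Polynomial ℤ)).map
        (Int.castRingHom (ZMod (d - 1))) := by
  have hP : (1 + X ^ (d - 1) : ℤ[X]).map (Int.castRingHom (ZMod (d - 1))) = 1 + X ^ (d - 1) := by
    simp
  rw [Polynomial.map_pow, hP]
  exact eq_pow_of_derivative_eq_zero (w := fun m => (W d m).map (Int.castRingHom (ZMod (d - 1))))
    (derivative_one_add_X_pow_eq_zero (ZMod.natCast_self _)) (by simp [W]) (map_W_succ _ d) m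

theorem stmt12 (d : ℕ) (hd : 2 ≤ d) (m : ℕ) :
    (W d m).map (Int.castRingHom (ZMod (d - 1))) =
      (((1 + Polynomial.X ^ (d - 1)) ^ m : Polynomial ℤ)).map
        (Int.castRingHom (ZMod (d - 1))) :=
  stmt12_general d m
end

section
/- Let p be a prime number. Then for every m ∈ ℕ the coefficientwise congruence W_{p,m+p}(x) ≡ x^{p(p−1)}·W_{p,m}(x) (mod p) holds in ℤ[x]. In particular W_{p,p}(x) ≡ x^{p(p−1)} (mod p), and for every m ∈ ℕ, writing m = jp + i with i ∈ {0,…,p−1}, one has W_{p,m}(x) ≡ x^{p(p−1)j}·W_{p,i}(x) (mod p). -/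
open Polynomial

/-! Reduced mod `p`, the recursion says `W_{p,m} = T^m 1` for the operator `T = D + 1 + X^(p-1)`.
Writing `T = S + 1` with `S = D + X^(p-1)`, Frobenius in the characteristic-`p` ring of
endomorphisms gives `T^p = S^p + 1`. Applying `S` lowers the power of `X` by one and creates a
factor `X^p + a`, so `S^p 1 = ∏_{a ∈ 𝔽_p^×} (X^p - a) = X^(p(p-1)) - 1`,
i.e. `W_{p,p} ≡ X^(p(p-1))`.
Finally `X^(p(p-1))` has zero derivative, so multiplication by it commutes with `T`. -/

namespace Polynomial

section CommRing

variable {R : Type*} [CommRing R]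

noncomputable def twistedDeriv (q : R[X]) : Module.End R R[X] :=
  derivative + LinearMap.mulLeft R q

theorem twistedDeriv_apply (q f : R[X]) : twistedDeriv q f = derivative f + q * f := rfl

theorem twistedDeriv_one_add (q : R[X]) : twistedDeriv (1 + q) = twistedDeriv q + 1 :=
  LinearMap.ext fun f => by
    simp only [twistedDeriv_apply, LinearMap.add_apply, Module.End.one_apply]
    ring

theorem twistedDeriv_mul {q g : R[X]} (hg : derivative g = 0) (f : R[X]) :
    twistedDeriv q (g * f) = g * twistedDeriv q f := by
  simp only [twistedDeriv_apply, derivative_mul, hg]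
  ring

theorem commute_twistedDeriv_mulLeft {q g : R[X]} (hg : derivative g = 0) :
    Commute (twistedDeriv q) (LinearMap.mulLeft R g) :=
  LinearMap.ext fun f => by
    simp only [Module.End.mul_apply, LinearMap.mulLeft_apply]
    exact twistedDeriv_mul hg f

theorem twistedDeriv_pow_mul {q g : R[X]} (hg : derivative g = 0) (m : ℕ) (f : R[X]) :
    (twistedDeriv q ^ m) (g * f) = g * (twistedDeriv q ^ m) f :=
  LinearMap.congr_fun ((commute_twistedDeriv_mulLeft hg).pow_left m).eq f

end CommRing

instance charP_end {R : Type*} [CommRing R] [IsDomain R] (p : ℕ) [CharP R p] :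
    CharP (Module.End R R[X]) p :=
  Module.charP_end ⟨1, by simp⟩

theorem derivative_X_pow_char_mul {R : Type*} [CommRing R] (p : ℕ) [CharP R p] (n : ℕ) :
    derivative (X ^ (p * n) : R[X]) = 0 := by
  simp [derivative_X_pow]

theorem derivative_expand_char {R : Type*} [CommRing R] (p : ℕ) [CharP R p] (f : R[X]) :
    derivative (expand R p f) = 0 := by
  simp [derivative_expand]

section ZModP

variable (p : ℕ) [Fact p.Prime]

theorem prod_range_X_sub_C_natCast_succ :
    ∏ t ∈ Finset.range (p - 1), (X - C ((t : ZMod p) + 1)) =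
      (X ^ (p - 1) - 1 : (ZMod p)[X]) := by
  have hp := (Fact.out : p.Prime).two_le
  have hlt : (1 : (ZMod p)[X]).degree < (X ^ (p - 1) : (ZMod p)[X]).degree := by
    rw [degree_one, degree_X_pow]; exact_mod_cast (by omega : 0 < p - 1)
  refine eq_of_degree_le_of_eval_index_eq (Finset.range (p - 1))
    (v := fun t : ℕ => (t : ZMod p) + 1) ?_ ?_ ?_ ?_ ?_
  · intro s hs t ht hst
    simp only [Finset.coe_range, Set.mem_Iio] at hs ht
    have := congrArg ZMod.val hst
    simp only at this
    rw [← Nat.cast_succ, ← Nat.cast_succ, ZMod.val_natCast_of_lt (by omega),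
      ZMod.val_natCast_of_lt (by omega)] at this
    omega
  · rw [← Lagrange.nodal, Lagrange.degree_nodal]
  · rw [← Lagrange.nodal, Lagrange.degree_nodal, degree_sub_eq_left_of_degree_lt hlt,
      degree_X_pow, Finset.card_range]
  · rw [(monic_prod_of_monic _ _ fun t _ => monic_X_sub_C _).leadingCoeff,
      leadingCoeff_sub_of_degree_lt hlt, leadingCoeff_X_pow]
  · intro t ht
    have hne : (t : ZMod p) + 1 ≠ 0 := by
      rw [← Nat.cast_succ, Ne, ZMod.natCast_eq_zero_iff]
      exact Nat.not_dvd_of_pos_of_lt t.succ_pos (by simp at ht; omega)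
    rw [eval_prod, Finset.prod_eq_zero ht (by simp)]
    simp [ZMod.pow_card_sub_one_eq_one hne]

theorem twistedDeriv_pow_succ_one {a k : ℕ} (h : a + k + 1 = p) :
    (twistedDeriv (X ^ (p - 1) : (ZMod p)[X]) ^ (k + 1)) 1 =
      X ^ a * expand (ZMod p) p (∏ t ∈ Finset.range k, (X - C ((t : ZMod p) + 1))) := by
  induction k generalizing a with
  | zero =>
    obtain rfl : a = p - 1 := by omega
    simp [twistedDeriv_apply]
  | succ k ih =>
    have hcast : ((a + 1 : ℕ) : ZMod p) = -((k : ZMod p) + 1) := by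
      have : ((a + 1 + (k + 1) : ℕ) : ZMod p) = 0 := by
        rw [show a + 1 + (k + 1) = p by omega, ZMod.natCast_self]
      push_cast at this ⊢
      linear_combination this
    set E := expand (ZMod p) p (∏ t ∈ Finset.range k, (X - C ((t : ZMod p) + 1)))
    rw [pow_succ', Module.End.mul_apply, ih (a := a + 1) (by omega), mul_comm,
      twistedDeriv_mul (derivative_expand_char p _), twistedDeriv_apply, derivative_X_pow,
      hcast, Finset.prod_range_succ, map_mul]
    simp only [map_sub, expand_X, expand_C, map_neg]
    have hXp : (X : (ZMod p)[X]) ^ p = X ^ (p - 1) * X := by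
      rw [← pow_succ]; congr 1; omega
    rw [Nat.add_sub_cancel, hXp]
    ring

theorem twistedDeriv_pow_char_one :
    (twistedDeriv (X ^ (p - 1) : (ZMod p)[X]) ^ p) 1 = X ^ (p * (p - 1)) - 1 := by
  have h := twistedDeriv_pow_succ_one p (a := 0) (k := p - 1)
    (by have := (Fact.out : p.Prime).one_le; omega)
  rw [Nat.sub_add_cancel (Fact.out : p.Prime).one_le, pow_zero, one_mul,
    prod_range_X_sub_C_natCast_succ] at h
  simpa [pow_mul] using h

theorem twistedDeriv_one_add_pow_char_one :
    (twistedDeriv (1 + X ^ (p - 1) : (ZMod p)[X]) ^ p) 1 = X ^ (p * (p - 1)) := by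
  rw [twistedDeriv_one_add, add_pow_char_of_commute _ (Commute.one_right _), one_pow,
    LinearMap.add_apply, twistedDeriv_pow_char_one, Module.End.one_apply, sub_add_cancel]

end ZModP

end Polynomial

theorem map_W_eq_twistedDeriv_pow {R : Type*} [CommRing R] (φ : ℤ →+* R) (d m : ℕ) :
    (W d m).map φ = (twistedDeriv (1 + X ^ (d - 1)) ^ m) 1 := by
  induction m with
  | zero => simp [W]
  | succ m ih =>
    rw [pow_succ', Module.End.mul_apply, ← ih, twistedDeriv_apply, W]
    simp [derivative_map]

section CharP

variable (p : ℕ) [Fact p.Prime]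

theorem map_W_self : (W p p).map (Int.castRingHom (ZMod p)) = X ^ (p * (p - 1)) := by
  rw [map_W_eq_twistedDeriv_pow, twistedDeriv_one_add_pow_char_one]

theorem map_W_add_self (m : ℕ) :
    (W p (m + p)).map (Int.castRingHom (ZMod p)) =
      X ^ (p * (p - 1)) * (W p m).map (Int.castRingHom (ZMod p)) := by
  set T := twistedDeriv (1 + X ^ (p - 1) : (ZMod p)[X])
  calc (W p (m + p)).map (Int.castRingHom (ZMod p)) = (T ^ m) ((T ^ p) 1) := by
        rw [map_W_eq_twistedDeriv_pow, pow_add, Module.End.mul_apply]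
    _ = (T ^ m) (X ^ (p * (p - 1)) * 1) := by rw [twistedDeriv_one_add_pow_char_one, mul_one]
    _ = X ^ (p * (p - 1)) * (T ^ m) 1 :=
        twistedDeriv_pow_mul (derivative_X_pow_char_mul p _) _ _
    _ = X ^ (p * (p - 1)) * (W p m).map (Int.castRingHom (ZMod p)) := by
        rw [map_W_eq_twistedDeriv_pow]

theorem map_W_mul_add (j i : ℕ) :
    (W p (j * p + i)).map (Int.castRingHom (ZMod p)) =
      X ^ (p * (p - 1) * j) * (W p i).map (Int.castRingHom (ZMod p)) := by
  induction j with
  | zero => simp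
  | succ j ih =>
    rw [add_mul, one_mul, add_right_comm, map_W_add_self, ih, ← mul_assoc, ← pow_add,
      mul_add_one, add_comm]

end CharP

theorem stmt13 (p : ℕ) (hp : p.Prime) :
    (∀ m : ℕ, (W p (m + p)).map (Int.castRingHom (ZMod p)) =
      ((Polynomial.X ^ (p * (p - 1)) * W p m)).map (Int.castRingHom (ZMod p))) ∧
    (W p p).map (Int.castRingHom (ZMod p)) = Polynomial.X ^ (p * (p - 1)) ∧
    (∀ m j i : ℕ, i < p → m = j * p + i →
      (W p m).map (Int.castRingHom (ZMod p)) =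
        ((Polynomial.X ^ (p * (p - 1) * j) * W p i)).map (Int.castRingHom (ZMod p))) := by
  have : Fact p.Prime := ⟨hp⟩
  refine ⟨fun m => ?_, map_W_self p, fun m j i _ hm => ?_⟩
  · rw [map_W_add_self, Polynomial.map_mul, Polynomial.map_pow, map_X]
  · rw [hm, map_W_mul_add, Polynomial.map_mul, Polynomial.map_pow, map_X]
end

section
/- Let d ≥ 2 be an integer and n ∈ ℕ_+. Then gcd(H_d(n) − 1, n) equals: n, if d is a composite number different from 4, or if d = 4 and ν_2(n) ≠ 2; n/2, if d = 4 and ν_2(n) = 2; and n/d^{ν_d(n)}, if d is a prime number. -/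
/-!
Sorting the permutations by their support, `H_d(n) = ∑ₖ C(n, dk) cₖ`, where `cₖ = (dk)!/(k! dᵏ)`
counts the ways to split `dk` points into `k` cycles of length `d`. As `n ∣ j C(n, j)`, the term
`C(n, dk) cₖ` is divisible by `n` once `gcd(n, dk) ∣ cₖ`. Reducing the recursion for `cₖ` modulo `d`
gives `cₖ ≡ ((d-1)!)ᵏ`. For composite `d ≠ 4` this makes `dᵏ ∣ cₖ`, hence `dk ∣ cₖ` and
`n ∣ H_d(n) - 1`. For prime `d` Wilson gives `cₖ ≡ (-1)ᵏ`; with Lucas, `H_d(n) ≡ (1 - 1)^(n/d) ≡ 0`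
when `d ∣ n`, so `H_d(n) - 1` is prime to `d`, while the prime-to-`d` part of `n` divides every term.
For `d = 4` only the terms `k = 1, 2` escape, and
`32 (6 C(n,4) + 1260 C(n,8)) = n (n-1)(n-2)(n-3)(8 + (n-4)(n-5)(n-6)(n-7))`, whose second factor is
`16` modulo `32` when `n ≡ 4 (mod 8)` and `0` otherwise.
-/

open Finset Nat

theorem mul_dvd_factorial {a b : ℕ} (ha : 0 < a) (hab : a < b) : a * b ∣ b ! := by
  rw [← mul_factorial_pred (by omega : b ≠ 0), mul_comm a]
  exact mul_dvd_mul_left b (dvd_factorial ha (by omega))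

theorem dvd_factorial_pred_of_not_prime {d : ℕ} (hd : 2 ≤ d) (hp : ¬ d.Prime) (h4 : d ≠ 4) :
    d ∣ (d - 1)! := by
  obtain ⟨a, ⟨b, rfl⟩, ha, had⟩ := exists_dvd_of_not_prime2 hd hp
  have hb : 2 ≤ b := by nlinarith
  rcases lt_trichotomy a b with hab | rfl | hab
  · exact (mul_dvd_factorial (by omega) hab).trans (factorial_dvd_factorial (by
      have : 2 * b ≤ a * b := Nat.mul_le_mul_right b ha
      omega))
  · have ha3 : 3 ≤ a := by
      by_contra!
      obtain rfl : a = 2 := by omega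
      exact h4 rfl
    calc a * a ∣ a * (2 * a) := mul_dvd_mul_left a (dvd_mul_left a 2)
      _ ∣ (2 * a)! := mul_dvd_factorial (by omega) (by omega)
      _ ∣ (a * a - 1)! := factorial_dvd_factorial (by
          have : 3 * a ≤ a * a := Nat.mul_le_mul_right a ha3
          omega)
  · rw [mul_comm]
    exact (mul_dvd_factorial (by omega) hab).trans (factorial_dvd_factorial (by
      have : 2 * a ≤ b * a := Nat.mul_le_mul_right a hb
      omega))

theorem factorization_le_of_pow_dvd {m c : ℕ} (hc : c ≠ 0) {k : ℕ} (h : m ^ k ∣ c) (q : ℕ) :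
    k * m.factorization q ≤ c.factorization q := by
  rcases eq_or_ne m 0 with rfl | hm
  · rcases k.eq_zero_or_pos with rfl | hk
    · simp
    · rw [zero_pow hk.ne', zero_dvd_iff] at h
      exact absurd h hc
  simpa using (factorization_le_iff_dvd (pow_ne_zero k hm) hc).2 h q

theorem lt_two_pow_pred {k : ℕ} (hk : 3 ≤ k) : k < 2 ^ (k - 1) := by
  obtain ⟨j, rfl⟩ : ∃ j, k = j + 3 := ⟨k - 3, by omega⟩
  have := Nat.lt_two_pow_self (n := j)
  rw [show j + 3 - 1 = j + 2 by omega, pow_add]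
  omega

theorem padicValNat_two_eq_two_iff {n : ℕ} (hn : n ≠ 0) : padicValNat 2 n = 2 ↔ n % 8 = 4 := by
  have h4 := padicValNat_dvd_iff_le (p := 2) (n := 2) hn
  have h8 := padicValNat_dvd_iff_le (p := 2) (n := 3) hn
  simp only [Nat.reducePow] at h4 h8
  omega

theorem dvd_choose_mul_of_gcd_dvd {m n j c : ℕ} (hmn : m ∣ n) (hc : m.gcd j ∣ c) :
    m ∣ n.choose j * c := by
  rcases j with _ | j
  · simpa using hc
  rcases n with _ | n
  · simp
  have hmj : m ∣ (j + 1) * (n + 1).choose (j + 1) :=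
    hmn.trans ⟨n.choose j, by rw [add_one_mul_choose_eq]; ring⟩
  rw [mul_comm]
  exact (Nat.dvd_gcd_mul_iff_dvd_mul.2 hmj).trans (mul_dvd_mul_right hc _)

-- The cycle through the least unused point takes `d - 1` of the other `dk + d - 1` points, in order.
def cyclePartitions (d : ℕ) : ℕ → ℕ
  | 0 => 1
  | k + 1 => cyclePartitions d k * (d * k + 1).ascFactorial (d - 1)

theorem cyclePartitions_mul_factorial_mul_pow {d : ℕ} (hd : 0 < d) (k : ℕ) :
    cyclePartitions d k * k ! * d ^ k = (d * k)! := by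
  induction k with
  | zero => simp [cyclePartitions]
  | succ k ih =>
    have hblock : (d * k)! * (d * k + 1).ascFactorial (d - 1) = (d * k + d - 1)! := by
      rw [factorial_mul_ascFactorial]; congr 1; omega
    have hlast : (d * (k + 1))! = (d * k + d) * (d * k + d - 1)! := by
      rw [show d * (k + 1) = d * k + d - 1 + 1 by rw [mul_add_one]; omega, factorial_succ]
      congr 1; omega
    rw [hlast, ← hblock, ← ih, cyclePartitions, factorial_succ]
    ring

theorem cyclePartitions_ne_zero {d : ℕ} (hd : 0 < d) (k : ℕ) : cyclePartitions d k ≠ 0 := by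
  intro h
  have := cyclePartitions_mul_factorial_mul_pow hd k
  simp only [h, zero_mul] at this
  exact factorial_ne_zero _ this.symm

theorem Hd_eq_sum_range {d n K : ℕ} (hd : 0 < d) (hK : n / d < K) :
    Hd d n = ∑ k ∈ range K, n.choose (d * k) * cyclePartitions d k := by
  have hle : ∀ k, d * k ≤ n ↔ k < n / d + 1 := fun k => by
    rw [Nat.lt_succ_iff, Nat.le_div_iff_mul_le hd, mul_comm]
  calc Hd d n = ∑ k ∈ range (n / d + 1), n.choose (d * k) * cyclePartitions d k := by
        refine sum_congr rfl fun k hk => Nat.div_eq_of_eq_mul_left (by positivity) ?_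
        rw [← choose_mul_factorial_mul_factorial ((hle k).2 (mem_range.1 hk)),
          ← cyclePartitions_mul_factorial_mul_pow hd]
        ring
    _ = _ := by
        refine sum_subset (range_subset_range.2 hK) fun k _ hk => ?_
        rw [choose_eq_zero_of_lt (by rw [mem_range, ← hle] at hk; omega), zero_mul]

theorem Hd_eq_sum_add_sum {d j : ℕ} (hd : 0 < d) (hj : 0 < j) (n : ℕ) :
    Hd d n = ∑ k ∈ range j, n.choose (d * k) * cyclePartitions d k +
      ∑ k ∈ range n, n.choose (d * (j + k)) * cyclePartitions d (j + k) := by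
  rw [Hd_eq_sum_range hd (K := j + n) (by have := Nat.div_le_self n d; omega), sum_range_add]

theorem Hd_eq_one_add_sum {d : ℕ} (hd : 0 < d) (n : ℕ) :
    Hd d n = 1 + ∑ k ∈ range n, n.choose (d * (1 + k)) * cyclePartitions d (1 + k) := by
  simp [Hd_eq_sum_add_sum hd one_pos n, cyclePartitions]

theorem Hd_sub_one_eq_sum {d : ℕ} (hd : 0 < d) (n : ℕ) :
    Hd d n - 1 = ∑ k ∈ range n, n.choose (d * (1 + k)) * cyclePartitions d (1 + k) := by
  rw [Hd_eq_one_add_sum hd, Nat.add_sub_cancel_left]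

theorem dvd_Hd_sub_one {d m n : ℕ} (hd : 0 < d) (hmn : m ∣ n)
    (h : ∀ k, 0 < k → m.gcd (d * k) ∣ cyclePartitions d k) : m ∣ Hd d n - 1 := by
  rw [Hd_sub_one_eq_sum hd]
  exact dvd_sum fun k _ => dvd_choose_mul_of_gcd_dvd hmn (h _ (by omega))

theorem mul_dvd_cyclePartitions_mul_pow {d k : ℕ} (hd : 2 ≤ d) (hk : 0 < k) :
    d * k ∣ cyclePartitions d k * d ^ k := by
  have hpos : 0 < d * k := by positivity
  refine Nat.dvd_of_mul_dvd_mul_right (factorial_pos k) ?_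
  calc d * k * k ! ∣ d * k * (d * k - 1)! :=
        mul_dvd_mul_left _ (factorial_dvd_factorial (by nlinarith [Nat.sub_add_cancel hpos]))
    _ = cyclePartitions d k * d ^ k * k ! := by
        rw [mul_factorial_pred hpos.ne', ← cyclePartitions_mul_factorial_mul_pow (by omega)]
        ring

theorem cast_ascFactorial_eq_factorial {d m : ℕ} (hm : m ∣ d) (k : ℕ) :
    ((d * k + 1).ascFactorial (d - 1) : ZMod m) = ((d - 1)! : ZMod m) := by
  have hd : (d : ZMod m) = 0 := (ZMod.natCast_eq_zero_iff d m).2 hm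
  rw [← one_ascFactorial, ascFactorial_eq_prod_range, ascFactorial_eq_prod_range]
  push_cast
  simp [hd, add_comm]

theorem cast_cyclePartitions {d m : ℕ} (hm : m ∣ d) (k : ℕ) :
    (cyclePartitions d k : ZMod m) = ((d - 1)! : ZMod m) ^ k := by
  induction k with
  | zero => simp [cyclePartitions]
  | succ k ih => rw [cyclePartitions, cast_mul, ih, cast_ascFactorial_eq_factorial hm, pow_succ]

theorem cast_cyclePartitions_self {d : ℕ} [Fact d.Prime] (k : ℕ) :
    (cyclePartitions d k : ZMod d) = (-1) ^ k := by
  rw [cast_cyclePartitions dvd_rfl, ZMod.wilsons_lemma]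

theorem pow_dvd_cyclePartitions {d m : ℕ} (hm : m ∣ d) (hfac : m ∣ (d - 1)!) (k : ℕ) :
    m ^ k ∣ cyclePartitions d k := by
  induction k with
  | zero => simp
  | succ k ih =>
    have hblock : m ∣ (d * k + 1).ascFactorial (d - 1) := by
      rw [← ZMod.natCast_eq_zero_iff, cast_ascFactorial_eq_factorial hm,
        ZMod.natCast_eq_zero_iff]
      exact hfac
    rw [pow_succ, cyclePartitions]
    exact mul_dvd_mul ih hblock

theorem mul_dvd_cyclePartitions {d k : ℕ} (hd : 2 ≤ d) (hk : 0 < k)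
    (h : ∀ q, q.Prime → q ∣ d →
      (d * k).factorization q ≤ (cyclePartitions d k).factorization q) :
    d * k ∣ cyclePartitions d k := by
  have hc := cyclePartitions_ne_zero (by omega : 0 < d) k
  refine (factorization_prime_le_iff_dvd (by positivity) hc).1 fun q hq => ?_
  by_cases hqd : q ∣ d
  · exact h q hq hqd
  · have := (factorization_le_iff_dvd (by positivity) (by positivity)).2
      (mul_dvd_cyclePartitions_mul_pow hd hk) q
    rwa [Nat.factorization_mul hc (by positivity), Finsupp.add_apply, Nat.factorization_pow,
      Finsupp.smul_apply, factorization_eq_zero_of_not_dvd hqd, smul_zero, add_zero] at this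

theorem mul_dvd_cyclePartitions_of_dvd_factorial {d k : ℕ} (hd : 2 ≤ d) (hk : 0 < k)
    (hfac : d ∣ (d - 1)!) : d * k ∣ cyclePartitions d k := by
  refine mul_dvd_cyclePartitions hd hk fun q hq hqd => ?_
  have hdk := factorization_le_of_pow_dvd (cyclePartitions_ne_zero (by omega) k)
    (pow_dvd_cyclePartitions dvd_rfl hfac k) q
  have hd1 : 1 ≤ d.factorization q := hq.factorization_pos_of_dvd (by omega) hqd
  have hk1 : k.factorization q < k := factorization_lt q (by omega)
  rw [Nat.factorization_mul (by omega) (by omega), Finsupp.add_apply]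
  nlinarith

theorem four_mul_dvd_cyclePartitions_four {k : ℕ} (hk : 3 ≤ k) :
    4 * k ∣ cyclePartitions 4 k := by
  refine mul_dvd_cyclePartitions le_add_self (by omega) fun q hq hq4 => ?_
  obtain rfl : q = 2 := (prime_dvd_prime_iff_eq hq prime_two).1
    (hq.dvd_of_dvd_pow (show q ∣ 2 ^ 2 from hq4))
  have hc := factorization_le_of_pow_dvd (cyclePartitions_ne_zero (by omega) k)
    (pow_dvd_cyclePartitions (m := 2) (d := 4) (by norm_num) (by decide) k) 2
  have hk2 : k.factorization 2 ≤ k - 2 := by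
    by_contra!
    have := (Nat.pow_le_pow_right two_pos (by omega : k - 1 ≤ k.factorization 2)).trans
      (ordProj_le 2 (by omega : k ≠ 0))
    have := lt_two_pow_pred hk
    omega
  have h4 : (4 : ℕ).factorization 2 = 2 := by
    rw [show (4 : ℕ) = 2 ^ 2 by rfl, Nat.factorization_pow]
    simp [prime_two.factorization_self]
  rw [prime_two.factorization_self] at hc
  rw [Nat.factorization_mul (by omega) (by omega), Finsupp.add_apply, h4]
  omega

theorem prime_dvd_Hd_mul {p m : ℕ} [hp : Fact p.Prime] (hm : m ≠ 0) : p ∣ Hd p (p * m) := by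
  have hterm : ∀ k, ((p * m).choose (p * k) * cyclePartitions p k : ZMod p) =
      (((-1) ^ k * m.choose k : ℤ) : ZMod p) := by
    intro k
    rw [(ZMod.natCast_eq_natCast_iff _ _ _).2 Choose.choose_mul_mul_modEq_choose_nat,
      cast_cyclePartitions_self]
    push_cast
    ring
  rw [← ZMod.natCast_eq_zero_iff, Hd_eq_sum_range hp.out.pos (K := m + 1)
    (by rw [Nat.mul_div_cancel_left m hp.out.pos]; omega), cast_sum]
  simp_rw [cast_mul, hterm, ← Int.cast_sum, Int.alternating_sum_range_choose_of_ne hm,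
    Int.cast_zero]

theorem gcd_Hd_sub_one_of_prime {p n : ℕ} (hp : p.Prime) (hn : n ≠ 0) :
    (Hd p n - 1).gcd n = n / p ^ n.factorization p := by
  have : Fact p.Prime := ⟨hp⟩
  set v := n.factorization p
  set n' := n / p ^ v
  have hpn' : p.Coprime n' := coprime_ordCompl hp hn
  have hn'T : n' ∣ Hd p n - 1 := by
    refine dvd_Hd_sub_one hp.pos (ordCompl_dvd n p) fun k hk => ?_
    have hcop : (n'.gcd (p * k)).Coprime (p ^ k) :=
      (hpn'.symm.coprime_dvd_left (Nat.gcd_dvd_left _ _)).pow_right k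
    exact hcop.dvd_of_dvd_mul_right
      ((Nat.gcd_dvd_right _ _).trans (mul_dvd_cyclePartitions_mul_pow hp.two_le hk))
  have hcop : (p ^ v).Coprime (Hd p n - 1) := by
    rcases eq_or_ne v 0 with hv | hv
    · simp [hv]
    refine (hp.coprime_iff_not_dvd.2 fun hpT => hp.one_lt.ne' ?_).pow_left v
    obtain ⟨m, hm⟩ : p ∣ n := dvd_of_factorization_pos hv
    have hpH := prime_dvd_Hd_mul (p := p) (m := m) (by rintro rfl; simp_all)
    rw [← hm, Hd_eq_one_add_sum hp.pos, add_comm, ← Hd_sub_one_eq_sum hp.pos] at hpH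
    exact Nat.dvd_one.1 ((Nat.dvd_add_right hpT).1 hpH)
  calc (Hd p n - 1).gcd n = (Hd p n - 1).gcd (p ^ v * n') := by
        rw [ordProj_mul_ordCompl_eq_self]
    _ = n' := by rw [hcop.gcd_mul_left_cancel_right, gcd_eq_right hn'T]

theorem Hd_four_sub_one_eq (n : ℕ) :
    Hd 4 n - 1 = n.choose 4 * 6 + n.choose 8 * 1260 +
      ∑ k ∈ range n, n.choose (4 * (3 + k)) * cyclePartitions 4 (3 + k) := by
  have h0 : cyclePartitions 4 0 = 1 := rfl
  have h1 : cyclePartitions 4 1 = 6 := rfl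
  have h2 : cyclePartitions 4 2 = 1260 := rfl
  rw [Hd_eq_sum_add_sum (d := 4) (j := 3) (by norm_num) (by norm_num), sum_range_succ,
    sum_range_succ, sum_range_one]
  simp only [mul_zero, mul_one, choose_zero_right, h0, h1, h2, Nat.reduceMul]
  omega

theorem gcd_Hd_four_sub_one (n : ℕ) :
    (Hd 4 n - 1).gcd n = (n.choose 4 * 6 + n.choose 8 * 1260).gcd n := by
  obtain ⟨r, hr⟩ : n ∣ ∑ k ∈ range n, n.choose (4 * (3 + k)) * cyclePartitions 4 (3 + k) :=
    dvd_sum fun k _ => dvd_choose_mul_of_gcd_dvd dvd_rfl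
      ((Nat.gcd_dvd_right _ _).trans (four_mul_dvd_cyclePartitions_four (by omega)))
  rw [Hd_four_sub_one_eq, hr, mul_comm n r, Nat.gcd_add_mul_right_left]

theorem thirtyTwo_mul_choose_four_add_choose_eight_eq (n : ℕ) :
    (32 * (n.choose 4 * 6 + n.choose 8 * 1260) : ℤ) =
      n * ((n - 1) * (n - 2) * (n - 3) * (8 + (n - 4) * (n - 5) * (n - 6) * (n - 7))) := by
  have h4 := descPochhammer_eval_eq_descFactorial ℤ n 4
  have h8 := descPochhammer_eval_eq_descFactorial ℤ n 8
  simp only [descFactorial_eq_factorial_mul_choose, descPochhammer_succ_eval,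
    descPochhammer_zero, Polynomial.eval_one] at h4 h8
  push_cast [factorial] at h4 h8
  linear_combination (-8 : ℤ) * h4 - h8

theorem zmod_thirtyTwo_sub_mul_eq_ite (x : ZMod 32) :
    (x - 1) * (x - 2) * (x - 3) * (8 + (x - 4) * (x - 5) * (x - 6) * (x - 7)) =
      if ZMod.castHom (by norm_num : 8 ∣ 32) (ZMod 8) x = 4 then 16 else 0 := by
  revert x
  decide

theorem exists_two_mul_choose_four_add_choose_eight_eq {n : ℕ} (hn : 0 < n) :
    ∃ e : ℕ, 2 * (n.choose 4 * 6 + n.choose 8 * 1260) = n * e ∧ (Odd e ↔ n % 8 = 4) := by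
  set b : ℕ := if n % 8 = 4 then 1 else 0 with hb
  obtain ⟨t, ht⟩ : ((32 : ℕ) : ℤ) ∣ ((n - 1) * (n - 2) * (n - 3) *
      (8 + (n - 4) * (n - 5) * (n - 6) * (n - 7)) : ℤ) - 16 * b := by
    have hcast : ZMod.castHom (by norm_num : 8 ∣ 32) (ZMod 8) (n : ZMod 32) = 4 ↔ n % 8 = 4 := by
      rw [map_natCast, ← Nat.cast_ofNat (n := 4), ZMod.natCast_eq_natCast_iff']
    rw [← ZMod.intCast_zmod_eq_zero_iff_dvd]
    push_cast
    rw [zmod_thirtyTwo_sub_mul_eq_ite, hb]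
    split_ifs <;> simp_all
  have h32 := thirtyTwo_mul_choose_four_add_choose_eight_eq n
  have he : (2 * (n.choose 4 * 6 + n.choose 8 * 1260) : ℤ) = n * (b + 2 * t) := by
    refine mul_left_cancel₀ (by norm_num : (16 : ℤ) ≠ 0) ?_
    push_cast at ht
    linear_combination h32 + (n : ℤ) * ht
  have he0 : 0 ≤ (b : ℤ) + 2 * t := by
    by_contra! h
    have : (n : ℤ) * (b + 2 * t) < 0 := mul_neg_of_pos_of_neg (by exact_mod_cast hn) h
    linarith
  lift (b : ℤ) + 2 * t to ℕ using he0 with e hbe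
  refine ⟨e, by exact_mod_cast he, ?_⟩
  rw [← Int.odd_coe_nat, hbe, Int.odd_add, hb]
  split_ifs <;> simp_all

theorem gcd_choose_four_add_choose_eight {n : ℕ} (hn : 0 < n) :
    (n.choose 4 * 6 + n.choose 8 * 1260).gcd n = if n % 8 = 4 then n / 2 else n := by
  obtain ⟨e, he, hodd⟩ := exists_two_mul_choose_four_add_choose_eight_eq hn
  split_ifs with h4
  · obtain ⟨h, hh⟩ : 2 ∣ n := by omega
    have hS : n.choose 4 * 6 + n.choose 8 * 1260 = h * e := by
      have : 2 * (n.choose 4 * 6 + n.choose 8 * 1260) = 2 * (h * e) := by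
        rw [he, hh, mul_assoc]
      omega
    rw [hS, hh, mul_comm 2 h, Nat.gcd_mul_left,
      Nat.Coprime.gcd_eq_one (hodd.2 h4).coprime_two_right, mul_one, Nat.mul_div_cancel _ two_pos]
  · obtain ⟨e', rfl⟩ : 2 ∣ e := even_iff_two_dvd.1 (not_odd_iff_even.1 (mt hodd.1 h4))
    have hS : n.choose 4 * 6 + n.choose 8 * 1260 = n * e' := by
      have : 2 * (n.choose 4 * 6 + n.choose 8 * 1260) = 2 * (n * e') := by
        rw [he, mul_left_comm]
      omega
    rw [hS]
    exact Nat.gcd_eq_right (dvd_mul_right n e')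

theorem dvd_Hd_sub_one_of_not_prime {d : ℕ} (hd : 2 ≤ d) (hp : ¬ d.Prime) (h4 : d ≠ 4) (n : ℕ) :
    n ∣ Hd d n - 1 :=
  dvd_Hd_sub_one (by omega) dvd_rfl fun _ hk => (Nat.gcd_dvd_right _ _).trans
    (mul_dvd_cyclePartitions_of_dvd_factorial hd hk (dvd_factorial_pred_of_not_prime hd hp h4))

theorem stmt15 (d : ℕ) (hd : 2 ≤ d) (n : ℕ) (hn : 0 < n) :
    ((¬ d.Prime ∧ d ≠ 4) ∨ (d = 4 ∧ padicValNat 2 n ≠ 2) →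
      Nat.gcd (Hd d n - 1) n = n) ∧
    (d = 4 ∧ padicValNat 2 n = 2 → Nat.gcd (Hd d n - 1) n = n / 2) ∧
    (d.Prime → Nat.gcd (Hd d n - 1) n = n / d ^ padicValNat d n) := by
  refine ⟨?_, ?_, fun hp => ?_⟩
  · rintro (⟨hp, h4⟩ | ⟨rfl, h2⟩)
    · exact Nat.gcd_eq_right (dvd_Hd_sub_one_of_not_prime hd hp h4 n)
    · rw [gcd_Hd_four_sub_one, gcd_choose_four_add_choose_eight hn,
        if_neg ((padicValNat_two_eq_two_iff hn.ne').not.1 h2)]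
  · rintro ⟨rfl, h2⟩
    rw [gcd_Hd_four_sub_one, gcd_choose_four_add_choose_eight hn,
      if_pos ((padicValNat_two_eq_two_iff hn.ne').1 h2)]
  · rw [← factorization_def n hp]
    exact gcd_Hd_sub_one_of_prime hp hn.ne'
end
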